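/- All the remaining pairwise products vanish: for every pair (i, j) ∈ {(0,0), (1,2), (2,1), (1,3), (3,1), (2,3), (3,2)} and all k, ℓ ∈ ℤ/7ℤ, one has u_i(k) ∧ u_j(ℓ) = 0 in Λ⁶ℂ⁷. -/
import Mathlib


noncomputable section

/-- The image in the exterior algebra of the standard basis vector `e_j` of ℂ⁷. -/
noncomputable def e (j : ZMod 7) : ExteriorAlgebra ℂ (ZMod 7 → ℂ) :=
  ExteriorAlgebra.ι ℂ (Pi.single j 1)

/-- u₀(k) = e_{1+k}∧e_{4+k}∧e_{2+k} − e_{6+k}∧e_{3+k}∧e_{5+k}. -/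
noncomputable def u₀ (k : ZMod 7) : ExteriorAlgebra ℂ (ZMod 7 → ℂ) :=
  e (1 + k) * e (4 + k) * e (2 + k) - e (6 + k) * e (3 + k) * e (5 + k)

/-- u₁(k) = e_k∧e_{1+k}∧e_{6+k}. -/
noncomputable def u₁ (k : ZMod 7) : ExteriorAlgebra ℂ (ZMod 7 → ℂ) :=
  e k * e (1 + k) * e (6 + k)

/-- u₂(k) = e_k∧e_{2+k}∧e_{5+k}. -/
noncomputable def u₂ (k : ZMod 7) : ExteriorAlgebra ℂ (ZMod 7 → ℂ) :=
  e k * e (2 + k) * e (5 + k)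

/-- u₃(k) = e_k∧e_{4+k}∧e_{3+k}. -/
noncomputable def u₃ (k : ZMod 7) : ExteriorAlgebra ℂ (ZMod 7 → ℂ) :=
  e k * e (4 + k) * e (3 + k)

/-- A product of six basis vectors equals `ιMulti` applied to the tuple of vectors. -/
lemma key (a b c d f g : ZMod 7) :
    (e a * e b * e c) * (e d * e f * e g) =
    ExteriorAlgebra.ιMulti ℂ 6 (fun i => Pi.single (![a,b,c,d,f,g] i) (1:ℂ)) := by
  simp [ExteriorAlgebra.ιMulti_apply, e, List.ofFn_succ, mul_assoc, Matrix.vecTail,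
    Matrix.vecHead, Function.comp]

/-- A product of six basis vectors with a repeated index vanishes. -/
lemma zero_of_not_inj (a b c d f g : ZMod 7)
    (h : ¬ Function.Injective ![a,b,c,d,f,g]) :
    (e a * e b * e c) * (e d * e f * e g) = 0 := by
  rw [key]
  obtain ⟨i, j, hij, hne⟩ := Function.not_injective_iff.mp h
  exact AlternatingMap.map_eq_zero_of_eq _ _ (by rw [hij]) hne

/-- The block-swap permutation of `Fin 6`. -/
def σ6 : Equiv.Perm (Fin 6) := (Equiv.swap 0 3) * (Equiv.swap 1 4) * (Equiv.swap 2 5)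

/-- Two products of three basis vectors anticommute. -/
lemma swap_blocks (a b c d f g : ZMod 7) :
    (e d * e f * e g) * (e a * e b * e c) = - ((e a * e b * e c) * (e d * e f * e g)) := by
  rw [key, key]
  have h : (fun i => Pi.single (![d,f,g,a,b,c] i) (1:ℂ)) =
      (fun i => Pi.single (![a,b,c,d,f,g] i) (1:ℂ)) ∘ σ6 := by
    funext i
    fin_cases i <;> rfl
  rw [h, AlternatingMap.map_perm]
  have : Equiv.Perm.sign σ6 = -1 := by decide
  rw [this]
  simp

lemma col12 : ∀ k l : ZMod 7, ¬ Function.Injective ![k, 1+k, 6+k, l, 2+l, 5+l] := by decide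
lemma col21 : ∀ k l : ZMod 7, ¬ Function.Injective ![k, 2+k, 5+k, l, 1+l, 6+l] := by decide
lemma col13 : ∀ k l : ZMod 7, ¬ Function.Injective ![k, 1+k, 6+k, l, 4+l, 3+l] := by decide
lemma col31 : ∀ k l : ZMod 7, ¬ Function.Injective ![k, 4+k, 3+k, l, 1+l, 6+l] := by decide
lemma col23 : ∀ k l : ZMod 7, ¬ Function.Injective ![k, 2+k, 5+k, l, 4+l, 3+l] := by decide
lemma col32 : ∀ k l : ZMod 7, ¬ Function.Injective ![k, 4+k, 3+k, l, 2+l, 5+l] := by decide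
lemma col11 : ∀ k l : ZMod 7, ¬ Function.Injective ![1+k, 4+k, 2+k, 1+l, 4+l, 2+l] := by decide
lemma col22 : ∀ k l : ZMod 7, ¬ Function.Injective ![6+k, 3+k, 5+k, 6+l, 3+l, 5+l] := by decide
lemma colA : ∀ k l : ZMod 7, l ≠ k → ¬ Function.Injective ![1+k, 4+k, 2+k, 6+l, 3+l, 5+l] := by
  decide
lemma colB : ∀ k l : ZMod 7, l ≠ k → ¬ Function.Injective ![6+k, 3+k, 5+k, 1+l, 4+l, 2+l] := by
  decide

/-- all the remaining pairwise products vanish: for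
(i,j) ∈ {(0,0), (1,2), (2,1), (1,3), (3,1), (2,3), (3,2)} and all k, ℓ,
u_i(k)∧u_j(ℓ) = 0. -/
theorem wedge_products_vanish (k l : ZMod 7) :
    u₀ k * u₀ l = 0 ∧
    u₁ k * u₂ l = 0 ∧ u₂ k * u₁ l = 0 ∧
    u₁ k * u₃ l = 0 ∧ u₃ k * u₁ l = 0 ∧
    u₂ k * u₃ l = 0 ∧ u₃ k * u₂ l = 0 := by
  refine ⟨?_, ?_, ?_, ?_, ?_, ?_, ?_⟩
  · unfold u₀
    rw [sub_mul, mul_sub, mul_sub]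
    have h11 := zero_of_not_inj (1+k) (4+k) (2+k) (1+l) (4+l) (2+l) (col11 k l)
    have h22 := zero_of_not_inj (6+k) (3+k) (5+k) (6+l) (3+l) (5+l) (col22 k l)
    by_cases h : l = k
    · subst h
      rw [h11, h22, swap_blocks]
      abel
    · rw [h11, h22,
        zero_of_not_inj (1+k) (4+k) (2+k) (6+l) (3+l) (5+l) (colA k l h),
        zero_of_not_inj (6+k) (3+k) (5+k) (1+l) (4+l) (2+l) (colB k l h)]
      abel
  · exact zero_of_not_inj _ _ _ _ _ _ (col12 k l)
  · exact zero_of_not_inj _ _ _ _ _ _ (col21 k l)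
  · exact zero_of_not_inj _ _ _ _ _ _ (col13 k l)
  · exact zero_of_not_inj _ _ _ _ _ _ (col31 k l)
  · exact zero_of_not_inj _ _ _ _ _ _ (col23 k l)
  · exact zero_of_not_inj _ _ _ _ _ _ (col32 k l)

end
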